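/- Let q be a prime power, s | m with n ≤ s and F_q ⊊ F_{q^s} ⊊ F_{q^m}. Let k < n, α_1,...,α_n ∈ F_{q^s} linearly independent over F_q, ℓ ≤ n-k, 0 ≤ h ≤ k-1, 0 ≤ t₁ < ... < t_ℓ ≤ n-k-1, and suppose η = (η₁,...,η_ℓ) ∈ F_{q^m}^ℓ is 1-F_{q^s}-sum-product free, i.e., ∑_{i=1}^ℓ a_i η_i ∉ F_{q^s}* for all a₁,...,a_ℓ ∈ F_{q^s}. Then the twisted Gabidulin code C₃ with ℓ twists, generated by the Moore rows (α_j^{q^i})_j for i ≠ h plus the row (α_j^{q^h} + ∑_{i=1}^ℓ η_i α_j^{q^{k+t_i}})_j, is MRD. -/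

import Mathlib

open Finset Matrix Polynomial Submodule FiniteField

/-! A codeword `x G` has rank weight at most `n - k` exactly when `k` linearly independent vectors
`V` of `F_q^n` annihilate it, and then `x` is in the kernel of `V Gᵀ`; so the code is MRD as soon as
`det (V Gᵀ) ≠ 0` for all such `V` (a nonzero codeword vanishing in its first `k - 1` coordinates
attains the bound). For the twisted code, `V Gᵀ` is the Moore matrix of `u = V α` with column `h`
twisted, so by linearity in that column `det (V Gᵀ) = d₀ + ∑ η_r d_r`, where the `d`'s are
Moore-type determinants of points of `F_{q^s}`, hence lie in `F_{q^s}`, and `d₀ ≠ 0` because a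
nonzero `q`-polynomial of `q`-degree `< k` cannot vanish on the `q^k` points of `span u`. Then
`∑ d_r η_r = -d₀ ∈ F_{q^s}*` contradicts sum-product freeness. -/

noncomputable def rankWeight (F : Type*) {K ι : Type*} [Field F] [Field K] [Algebra F K]
    (c : ι → K) : ℕ :=
  Module.finrank F (span F (Set.range c))

section RankWeight

variable {F K : Type*} [Field F] [Field K] [Algebra F K]

lemma rankWeight_zero {ι : Type*} : rankWeight F (0 : ι → K) = 0 := by
  rw [rankWeight, eq_bot_iff.2 (span_le.2 (by rintro _ ⟨i, rfl⟩; simp)), finrank_bot]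

lemma rankWeight_le_of_forall_lt_eq_zero {n d : ℕ} {c : Fin n → K}
    (hc : ∀ j : Fin n, (j : ℕ) < d → c j = 0) : rankWeight F c ≤ n - d := by
  let c' : Fin (n - d) → K := fun j => c ⟨d + j, by omega⟩
  have hle : span F (Set.range c) ≤ span F (Set.range c') := by
    refine span_le.2 ?_
    rintro _ ⟨j, rfl⟩
    by_cases hj : (j : ℕ) < d
    · simp [hc j hj]
    · exact subset_span ⟨⟨j - d, by omega⟩, congrArg c (Fin.ext (by simp; omega))⟩
  have := FiniteDimensional.span_of_finite F (Set.finite_range c')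
  calc rankWeight F c ≤ Module.finrank F (span F (Set.range c')) := finrank_mono hle
    _ ≤ n - d := (finrank_range_le_card c').trans (by simp)

lemma exists_ne_zero_forall_lt_vecMul_eq_zero {k n d : ℕ} (G : Matrix (Fin k) (Fin n) K)
    (hd : d < k) : ∃ x ≠ 0, ∀ j : Fin n, (j : ℕ) < d → (x ᵥ* G) j = 0 := by
  let f : (Fin k → K) →ₗ[K] ({j : Fin n // (j : ℕ) < d} → K) :=
    LinearMap.funLeft K K Subtype.val ∘ₗ G.vecMulLinear
  have hcard : Fintype.card {j : Fin n // (j : ℕ) < d} ≤ d :=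
    (Fintype.card_le_of_injective (fun j => (⟨j.1, j.2⟩ : Fin d))
      fun i j hij => by simpa [Subtype.ext_iff, Fin.ext_iff] using hij).trans_eq
      (Fintype.card_fin d)
  obtain ⟨x, hx, hx0⟩ := (Submodule.ne_bot_iff _).1
    (LinearMap.ker_ne_bot_of_finrank_lt (f := f) (by simpa using hcard.trans_lt hd))
  exact ⟨x, hx0, fun j hj => congrFun hx ⟨j, hj⟩⟩

lemma lt_rankWeight_vecMul_add {k n : ℕ} (G : Matrix (Fin k) (Fin n) K)
    (hG : ∀ V : Fin k → Fin n → F, LinearIndependent F V →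
      ((of V).map (algebraMap F K) * Gᵀ).det ≠ 0)
    {x : Fin k → K} (hx : x ≠ 0) : n < rankWeight F (x ᵥ* G) + k := by
  let φ := Fintype.linearCombination F (x ᵥ* G)
  have hrank : rankWeight F (x ᵥ* G) + Module.finrank F (LinearMap.ker φ) = n := by
    have := φ.finrank_range_add_finrank_ker
    rwa [Fintype.range_linearCombination, Module.finrank_fin_fun] at this
  by_contra! hle
  obtain ⟨V, hV⟩ := exists_linearIndependent_of_le_finrank (R := F) (M := LinearMap.ker φ)
    (n := k) (by omega)
  refine hG (fun a => V a) (hV.map' _ (ker_subtype _)) (exists_mulVec_eq_zero_iff.1 ⟨x, hx, ?_⟩)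
  rw [← mulVec_mulVec, mulVec_transpose]
  ext a
  have h := LinearMap.mem_ker.1 (V a).2
  simp only [φ, Fintype.linearCombination_apply] at h
  convert h using 1 <;> simp [mulVec, dotProduct, Algebra.smul_def]

theorem sInf_rankWeight_eq {k n : ℕ} (hk : 0 < k) (hkn : k ≤ n) (G : Matrix (Fin k) (Fin n) K)
    (hG : ∀ V : Fin k → Fin n → F, LinearIndependent F V →
      ((of V).map (algebraMap F K) * Gᵀ).det ≠ 0) :
    sInf {w | ∃ c ∈ span K (Set.range G), c ≠ 0 ∧ w = rankWeight F c} = n - k + 1 := by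
  have hspan : ∀ x : Fin k → K, x ᵥ* G ∈ span K (Set.range G) := fun x =>
    (mem_span_range_iff_exists_fun K).2 ⟨x, (vecMul_eq_sum x G).symm⟩
  have hlow : ∀ x ≠ 0, n - k + 1 ≤ rankWeight F (x ᵥ* G) := fun x hx => by
    have := lt_rankWeight_vecMul_add G hG hx
    omega
  refine IsLeast.csInf_eq ⟨?_, ?_⟩
  · obtain ⟨x, hx, hzero⟩ := exists_ne_zero_forall_lt_vecMul_eq_zero G (Nat.sub_lt hk one_pos)
    have hlo := hlow x hx
    have hup := rankWeight_le_of_forall_lt_eq_zero (F := F) hzero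
    refine ⟨x ᵥ* G, hspan x, fun h0 => ?_, by omega⟩
    rw [h0, rankWeight_zero] at hlo
    omega
  · rintro _ ⟨c, hc, hc0, rfl⟩
    obtain ⟨x, rfl⟩ := (mem_span_range_iff_exists_fun K).1 hc
    rw [← vecMul_eq_sum] at hc0 ⊢
    exact hlow x (by rintro rfl; simp at hc0)

end RankWeight

section Frobenius

variable (Fq : Type*) {L : Type*} [Field Fq] [Fintype Fq] [CommRing L] [Algebra Fq L]

lemma frobeniusAlgHom_pow_apply (e : ℕ) (x : L) :
    (frobeniusAlgHom Fq L ^ e) x = x ^ Fintype.card Fq ^ e := by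
  rw [AlgHom.coe_pow, coe_frobeniusAlgHom, pow_iterate]

lemma sum_smul_pow_card_pow {ι : Type*} [Fintype ι] (v : ι → Fq) (α : ι → L) (e : ℕ) :
    (∑ j, v j • α j) ^ Fintype.card Fq ^ e = ∑ j, v j • α j ^ Fintype.card Fq ^ e := by
  simp [← frobeniusAlgHom_pow_apply, map_sum]

end Frobenius

-- `e = Fin.val` gives the Moore matrix, `Function.update Fin.val h d` the paper's `M^{(h,d)}`.
def mooreMatrix {R ι κ : Type*} [Monoid R] (q : ℕ) (e : κ → ℕ) (u : ι → R) : Matrix ι κ R :=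
  of fun a i => u a ^ q ^ e i

lemma mooreMatrix_map {R S ι κ : Type*} [Semiring R] [Semiring S] (f : R →+* S) (q : ℕ)
    (e : κ → ℕ) (u : ι → R) : (mooreMatrix q e u).map f = mooreMatrix q e (f ∘ u) := by
  ext; simp [mooreMatrix]

lemma det_updateCol_mooreMatrix_add_sum {R κ ι : Type*} [CommRing R] [Fintype κ] [DecidableEq κ]
    [Fintype ι] (q : ℕ) (e : κ → ℕ) (u : κ → R) (i : κ) (η : ι → R) (d : ι → ℕ) :
    ((mooreMatrix q e u).updateCol i (fun a => u a ^ q ^ e i + ∑ r, η r * u a ^ q ^ d r)).det =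
      (mooreMatrix q e u).det + ∑ r, η r * (mooreMatrix q (Function.update e i (d r)) u).det := by
  have hcol : (fun a => u a ^ q ^ e i + ∑ r, η r * u a ^ q ^ d r) =
      (fun a => mooreMatrix q e u a i) + ∑ r, η r • fun a => u a ^ q ^ d r := by
    ext; simp [mooreMatrix]
  have hupd : ∀ r, (mooreMatrix q e u).updateCol i (fun a => u a ^ q ^ d r) =
      mooreMatrix q (Function.update e i (d r)) u := by
    intro r; ext a j
    by_cases hj : j = i
    · subst hj; simp [mooreMatrix]
    · simp [mooreMatrix, hj]
  simp_rw [hcol, ← cramer_apply, map_add, map_sum, map_smul]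
  simp [cramer_apply, updateCol_eq_self, hupd]

noncomputable def qPolynomial {L : Type*} [Semiring L] (q : ℕ) {k : ℕ} (y : Fin k → L) : L[X] :=
  ∑ i, C (y i) * X ^ q ^ (i : ℕ)

section QPolynomial

variable {L : Type*} [CommRing L] {q k : ℕ}

lemma qPolynomial_ne_zero (hq : 1 < q) {y : Fin k → L} (hy : y ≠ 0) : qPolynomial q y ≠ 0 := by
  classical
  obtain ⟨i₀, hi₀⟩ := Function.ne_iff.1 hy
  intro h0
  have := congrArg (coeff · (q ^ (i₀ : ℕ))) h0
  simp [qPolynomial, finsetSum_coeff, coeff_C_mul, coeff_X_pow, Nat.pow_right_inj hq,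
    Fin.val_inj] at this
  exact hi₀ this

lemma natDegree_qPolynomial_lt (hq : 1 < q) (hk : 0 < k) (y : Fin k → L) :
    (qPolynomial q y).natDegree < q ^ k := by
  refine lt_of_le_of_lt (natDegree_sum_le_of_forall_le _ _ (n := q ^ (k - 1)) fun i _ => ?_)
    (Nat.pow_lt_pow_right hq (by omega))
  exact (natDegree_C_mul_le _ _).trans ((natDegree_X_pow_le _).trans
    (Nat.pow_le_pow_right hq.le (by have := i.2; omega)))

lemma eval_qPolynomial_eq_zero_of_mem_span (Fq : Type*) [Field Fq] [Fintype Fq] [Algebra Fq L]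
    {y : Fin k → L} {s : Set L} (hs : ∀ z ∈ s, (qPolynomial (Fintype.card Fq) y).eval z = 0)
    {z : L} (hz : z ∈ span Fq s) : (qPolynomial (Fintype.card Fq) y).eval z = 0 := by
  let φ : L →ₗ[Fq] L := ∑ i, y i • (frobeniusAlgHom Fq L ^ (i : ℕ)).toLinearMap
  have hφ : ∀ z, φ z = (qPolynomial (Fintype.card Fq) y).eval z := fun z => by
    simp only [φ, qPolynomial, LinearMap.sum_apply, LinearMap.smul_apply,
      AlgHom.toLinearMap_apply, frobeniusAlgHom_pow_apply, eval_finsetSum, eval_mul, eval_C,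
      eval_pow, eval_X, smul_eq_mul]
  rw [← hφ, ← LinearMap.mem_ker]
  exact span_le.2 (fun z hz => by simpa [hφ] using hs z hz) hz

end QPolynomial

lemma det_mooreMatrix_ne_zero {Fq L : Type*} [Field Fq] [Fintype Fq] [Field L] [Algebra Fq L]
    {k : ℕ} {u : Fin k → L} (hu : LinearIndependent Fq u) :
    (mooreMatrix (Fintype.card Fq) Fin.val u).det ≠ 0 := by
  classical
  set q := Fintype.card Fq
  have hq : 1 < q := Fintype.one_lt_card
  intro hdet
  obtain ⟨y, hy0, hy⟩ := exists_mulVec_eq_zero_iff.2 hdet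
  obtain ⟨i₀, -⟩ := Function.ne_iff.1 hy0
  set P := qPolynomial q y
  have hP0 : P ≠ 0 := qPolynomial_ne_zero hq hy0
  have hroots : (span Fq (Set.range u) : Set L) ⊆ P.roots.toFinset := by
    intro z hz
    refine Multiset.mem_toFinset.2 ((mem_roots hP0).2
      (eval_qPolynomial_eq_zero_of_mem_span Fq ?_ hz))
    rintro _ ⟨a, rfl⟩
    rw [← Pi.zero_apply (M := fun _ : Fin k => L) a, ← hy]
    simp only [qPolynomial, eval_finsetSum, eval_mul, eval_C, eval_pow, eval_X, mulVec,
      dotProduct, mooreMatrix, of_apply]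
    exact Finset.sum_congr rfl fun i _ => mul_comm _ _
  have := FiniteDimensional.span_of_finite Fq (Set.finite_range u)
  have hcard : q ^ k ≤ P.natDegree := calc
    q ^ k = Nat.card (span Fq (Set.range u)) := by
      rw [Module.natCard_eq_pow_finrank (K := Fq), finrank_span_eq_card hu,
        Nat.card_eq_fintype_card, Fintype.card_fin]
    _ = (span Fq (Set.range u) : Set L).ncard := Nat.card_coe_set_eq _
    _ ≤ P.roots.toFinset.card := by
      simpa using Set.ncard_le_ncard hroots (Finset.finite_toSet _)
    _ ≤ P.natDegree := (Multiset.toFinset_card_le _).trans (card_roots' P)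
  exact (natDegree_qPolynomial_lt hq i₀.pos y).not_ge hcard

def twistedGabidulinMatrix {K : Type*} [CommRing K] (q k n h : ℕ) {ℓ : ℕ} (t : Fin ℓ → ℕ)
    (η : Fin ℓ → K) (α : Fin n → K) : Matrix (Fin k) (Fin n) K :=
  of fun i j => if (i : ℕ) = h then α j ^ q ^ h + ∑ r, η r * α j ^ q ^ (k + t r)
    else α j ^ q ^ (i : ℕ)

lemma map_mul_transpose_twistedGabidulinMatrix {Fq K : Type*} [Field Fq] [Fintype Fq]
    [CommRing K] [Algebra Fq K] {k n h ℓ : ℕ} (hh : h < k) (t : Fin ℓ → ℕ) (η : Fin ℓ → K)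
    (α : Fin n → K) (V : Fin k → Fin n → Fq) {u : Fin k → K}
    (hu : ∀ a, ∑ j, V a j • α j = u a) :
    (of V).map (algebraMap Fq K) * (twistedGabidulinMatrix (Fintype.card Fq) k n h t η α)ᵀ =
      (mooreMatrix (Fintype.card Fq) Fin.val u).updateCol ⟨h, hh⟩
        fun a => u a ^ Fintype.card Fq ^ h + ∑ r, η r * u a ^ Fintype.card Fq ^ (k + t r) := by
  ext a i
  simp only [← hu, mul_apply, map_apply, of_apply, transpose_apply, twistedGabidulinMatrix,
    updateCol_apply, mooreMatrix, sum_smul_pow_card_pow, Fin.ext_iff]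
  split_ifs <;> simp [Algebra.smul_def, Finset.mul_sum, Finset.sum_add_distrib, mul_add,
    mul_left_comm, Finset.sum_comm (γ := Fin ℓ)]

theorem det_map_mul_twistedGabidulinMatrix_ne_zero {Fq Fs K : Type*} [Field Fq] [Fintype Fq]
    [Field Fs] [Field K] [Algebra Fq Fs] [Algebra Fs K] [Algebra Fq K] [IsScalarTower Fq Fs K]
    {k n h ℓ : ℕ} (hh : h < k) (t : Fin ℓ → ℕ) {η : Fin ℓ → K}
    (hfree : ∀ a : Fin ℓ → Fs,
      (∑ i, algebraMap Fs K (a i) * η i) = 0 ∨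
        (∑ i, algebraMap Fs K (a i) * η i) ∉ Set.range (algebraMap Fs K))
    {β : Fin n → Fs} (hβ : LinearIndependent Fq β) {V : Fin k → Fin n → Fq}
    (hV : LinearIndependent Fq V) :
    ((of V).map (algebraMap Fq K) *
      (twistedGabidulinMatrix (Fintype.card Fq) k n h t η (algebraMap Fs K ∘ β))ᵀ).det ≠ 0 := by
  set q := Fintype.card Fq
  set w : Fin k → Fs := fun a => ∑ j, V a j • β j
  have hw : LinearIndependent Fq w := hV.map' (Fintype.linearCombination Fq β)
    (LinearMap.ker_eq_bot.2 (linearIndependent_iff_injective_fintypeLinearCombination.1 hβ))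
  have hu : ∀ a, ∑ j, V a j • (algebraMap Fs K ∘ β) j = (algebraMap Fs K ∘ w) a := fun a => by
    simp [w, map_sum, Algebra.smul_def, IsScalarTower.algebraMap_apply Fq Fs K]
  rw [map_mul_transpose_twistedGabidulinMatrix hh t η _ V hu,
    det_updateCol_mooreMatrix_add_sum q Fin.val _ ⟨h, hh⟩ η (fun r => k + t r)]
  simp only [← mooreMatrix_map, ← RingHom.mapMatrix_apply, ← RingHom.map_det]
  intro hdet
  set d : Fin ℓ → Fs := fun r => (mooreMatrix q (Function.update Fin.val ⟨h, hh⟩ (k + t r)) w).det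
  have hsum : ∑ r, algebraMap Fs K (d r) * η r
      = algebraMap Fs K (-(mooreMatrix q Fin.val w).det) := by
    rw [map_neg, eq_neg_iff_add_eq_zero, add_comm, ← hdet]
    simp [d, mul_comm]
  rcases hfree d with h0 | h0
  · exact det_mooreMatrix_ne_zero hw (by simpa [h0] using hsum.symm)
  · exact h0 ⟨_, hsum.symm⟩

theorem C3_sum_product_free_MRD_general {Fq Fs K : Type*} [Field Fq] [Fintype Fq] [Field Fs]
    [Field K] [Algebra Fq Fs] [Algebra Fs K] [Algebra Fq K] [IsScalarTower Fq Fs K]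
    (q n k h ℓ : ℕ) (hq : Fintype.card Fq = q)
    (hkn : k < n) (hh : h < k)
    (t : Fin ℓ → ℕ)
    (β : ℕ → Fs) (hβ : LinearIndependent Fq (fun i : Fin n => β (i:ℕ)))
    (η : Fin ℓ → K)
    (hfree : ∀ a : Fin ℓ → Fs,
      (∑ i, algebraMap Fs K (a i) * η i) = 0 ∨
        (∑ i, algebraMap Fs K (a i) * η i) ∉ Set.range (algebraMap Fs K)) :
    sInf {w : ℕ | ∃ c ∈ Submodule.span K (Set.range (fun i : Fin k => fun j : Fin n =>
          if (i:ℕ) = h then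
            algebraMap Fs K (β (j:ℕ)) ^ q ^ h +
              ∑ r : Fin ℓ, η r * algebraMap Fs K (β (j:ℕ)) ^ q ^ (k + t r)
          else algebraMap Fs K (β (j:ℕ)) ^ q ^ (i:ℕ))),
        c ≠ 0 ∧ w = Module.finrank Fq (Submodule.span Fq (Set.range c))} = n - k + 1 := by
  subst hq
  exact sInf_rankWeight_eq (Nat.zero_lt_of_lt hh) hkn.le _
    fun V hV => det_map_mul_twistedGabidulinMatrix_ne_zero hh t hfree hβ hV

/-- with evaluation points in an intermediate subfield `F_{q^s}` (`n ≤ s`) and a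
twist vector `η = (η₁,…,η_ℓ)` that is `1`-`F_{q^s}`-sum-product free (no `F_{q^s}`-linear
combination of the `η_i` lies in `F_{q^s}*`), the twisted Gabidulin code `C₃` with `ℓ`
twists is MRD. -/
theorem C3_sum_product_free_MRD {Fq Fs K : Type*} [Field Fq] [Fintype Fq] [Field Fs] [Fintype Fs]
    [Field K] [Fintype K] [Algebra Fq Fs] [Algebra Fs K] [Algebra Fq K] [IsScalarTower Fq Fs K]
    (q s m n k h ℓ : ℕ) (hq : Fintype.card Fq = q) (hFs : Fintype.card Fs = q ^ s)
    (hK : Fintype.card K = q ^ m) (hs1 : 1 < s) (hsm : s < m) (hsd : s ∣ m)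
    (hns : n ≤ s) (hkn : k < n) (hh : h < k) (hℓ : ℓ ≤ n - k)
    (t : Fin ℓ → ℕ) (htmono : StrictMono t) (htub : ∀ i, t i ≤ n - k - 1)
    (β : ℕ → Fs) (hβ : LinearIndependent Fq (fun i : Fin n => β (i:ℕ)))
    (η : Fin ℓ → K) (hη : ∀ i, η i ≠ 0)
    (hfree : ∀ a : Fin ℓ → Fs,
      (∑ i, algebraMap Fs K (a i) * η i) = 0 ∨
        (∑ i, algebraMap Fs K (a i) * η i) ∉ Set.range (algebraMap Fs K)) :
    sInf {w : ℕ | ∃ c ∈ Submodule.span K (Set.range (fun i : Fin k => fun j : Fin n =>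
          if (i:ℕ) = h then
            algebraMap Fs K (β (j:ℕ)) ^ q ^ h +
              ∑ r : Fin ℓ, η r * algebraMap Fs K (β (j:ℕ)) ^ q ^ (k + t r)
          else algebraMap Fs K (β (j:ℕ)) ^ q ^ (i:ℕ))),
        c ≠ 0 ∧ w = Module.finrank Fq (Submodule.span Fq (Set.range c))} = n - k + 1 :=
  C3_sum_product_free_MRD_general q n k h ℓ hq hkn hh t β hβ η hfree
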